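/- For natural numbers n and j and complex number a such that (2a-j)_k ≠ 0 for 0 ≤ k ≤ 2n, ∑_{k=0}^{2n} (-2n)_k (a)_k 2^k / ((2a-j)_k k!) = (2^{2n} (1/2)_n / (2a-j)_{2n}) · ∑_{r=0}^{min(⌊j/2⌋, n)} (-1)^r C(j,2r) (-n)_r (a)_{n-r}. -/

import Mathlib

/-!
Multiplied by `(2a-j)_{2n}`, the left side becomes `∑ₖ (-2n)ₖ (a)ₖ 2ᵏ (2a-j+k)_{2n-k} / k!`.
Writing `2ᵏ = ∑ᵢ C(k,i)` and applying Chu–Vandermonde, this is `(2n)!` times the coefficient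
of `x^{2n}` in `(1+x)^{-a} (1-x)^{j-a}`, with `(1-x)^{-b} = ∑ₖ (b)ₖ xᵏ/k!`.
Now `(1+x)^{-a} (1-x)^{-a} = (1-x²)^{-a}`, as both sides solve `(1-x²) y' = 2ax y`, `y(0) = 1`.
So the coefficient is `∑ᵣ C(j,2r) (a)_{n-r} / (n-r)!`, and `(2n)! = 4ⁿ (1/2)ₙ n!`.
-/

open Finset

/-- The Pochhammer symbol (rising factorial) `(x)_k = x (x+1) ⋯ (x+k-1)`. -/
noncomputable def poch (x : ℂ) (k : ℕ) : ℂ := (ascPochhammer ℂ k).eval x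

open PowerSeries

lemma poch_zero (x : ℂ) : poch x 0 = 1 := by simp [poch]

lemma poch_succ (x : ℂ) (k : ℕ) : poch x (k + 1) = poch x k * (x + k) := by
  simp [poch, ascPochhammer_succ_eval]

lemma poch_add (x : ℂ) (m k : ℕ) : poch x (m + k) = poch x m * poch (x + m) k := by
  simpa [poch, Polynomial.eval_comp] using
    (congrArg (Polynomial.eval x) (ascPochhammer_mul ℂ m k)).symm

lemma poch_succ' (x : ℂ) (k : ℕ) : poch x (k + 1) = x * poch (x + 1) k := by
  rw [add_comm, poch_add]; simp [poch]

lemma poch_neg_natCast (N k : ℕ) :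
    poch (-N) k = (-1) ^ k * k.factorial * N.choose k := by
  rw [poch, ascPochhammer_eval_neg_eq_descPochhammer, descPochhammer_eval_eq_descFactorial,
    Nat.descFactorial_eq_factorial_mul_choose]
  push_cast; ring

lemma descPochhammer_smeval_eq_poch (x : ℂ) (k : ℕ) :
    (descPochhammer ℤ k).smeval x = poch (x - k + 1) k := by
  rw [Polynomial.descPochhammer_smeval_eq_ascPochhammer,
    Polynomial.ascPochhammer_smeval_eq_eval, poch]

lemma poch_neg_sub_add_one (x : ℂ) (k : ℕ) : poch (-x - k + 1) k = (-1) ^ k * poch x k := by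
  rw [poch, show -x - k + 1 = -(x + k - 1) by ring, ascPochhammer_eval_neg_eq_descPochhammer,
    descPochhammer_eval_eq_ascPochhammer, poch]
  ring_nf

/-- Chu–Vandermonde. -/
lemma poch_sub_eq_sum (b c : ℂ) (N : ℕ) :
    poch (c - b) N = ∑ m ∈ range (N + 1),
      (-1) ^ m * N.choose m * poch b m * poch (c + m) (N - m) := by
  have h := Ring.descPochhammer_smeval_add (r := -b) (s := c + N - 1) N (Commute.all _ _)
  rw [Nat.sum_antidiagonal_eq_sum_range_succ (fun i j => (N.choose i : ℂ) *
    ((descPochhammer ℤ i).smeval (-b) * (descPochhammer ℤ j).smeval (c + N - 1)))] at h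
  simp only [descPochhammer_smeval_eq_poch, poch_neg_sub_add_one] at h
  rw [show c - b = -b + (c + N - 1) - N + 1 by ring, h]
  refine sum_congr rfl fun m hm => ?_
  rw [Nat.cast_sub (Nat.lt_succ_iff.mp (mem_range.mp hm))]
  ring_nf

lemma inv_poch_eq_div {c : ℂ} {k N : ℕ} (hk : k ≤ N) (hc : poch c N ≠ 0) :
    (poch c k)⁻¹ = poch (c + k) (N - k) / poch c N := by
  have hsplit : poch c N = poch c k * poch (c + k) (N - k) := by
    rw [← poch_add, Nat.add_sub_cancel' hk]
  rw [hsplit] at hc ⊢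
  rw [mul_comm, ← div_div, div_self (right_ne_zero_of_mul hc), one_div]

lemma two_pow_mul_poch_half_mul_factorial (n : ℕ) :
    2 ^ (2 * n) * poch (1 / 2) n * n.factorial = (2 * n).factorial := by
  induction n with
  | zero => simp [poch_zero]
  | succ n ih =>
    rw [poch_succ, Nat.mul_succ, Nat.factorial_succ (2 * n + 1), Nat.factorial_succ (2 * n),
      Nat.factorial_succ n, pow_add]
    push_cast
    linear_combination (4 * (1 / 2 + (n : ℂ)) * (n + 1)) * ih

namespace PowerSeries

section CommSemiring

variable {R : Type*} [CommSemiring R]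

theorem rescale_C (c r : R) : rescale c (C r) = C r := by
  ext n
  rcases n with _ | n <;> simp [coeff_C]

theorem derivative_rescale (c : R) (f : R⟦X⟧) :
    d⁄dX R (rescale c f) = C c * rescale c (d⁄dX R f) := by
  ext n
  simp [coeff_derivative, coeff_rescale, pow_succ]
  ring

end CommSemiring

section CommRing

variable {R : Type*} [CommRing R]

theorem derivative_expand (p : ℕ) (hp : p ≠ 0) (f : R⟦X⟧) :
    d⁄dX R (expand p hp f) = expand p hp (d⁄dX R f) * ((p : R⟦X⟧) * X ^ (p - 1)) := by
  rw [expand_apply, expand_apply, derivative_subst (HasSubst.X_pow hp), derivative_pow,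
    derivative_X, mul_one]

theorem coeff_mul_expand (p : ℕ) (hp : p ≠ 0) (φ ψ : R⟦X⟧) (n : ℕ) :
    coeff (p * n) (ψ * expand p hp φ)
      = ∑ r ∈ range (n + 1), coeff (p * r) ψ * coeff (n - r) φ := by
  set F : ℕ → R := fun i => coeff i ψ * coeff (p * n - i) (expand p hp φ)
  have hsupp : ∑ i ∈ range (p * n + 1), F i = ∑ i ∈ (range (n + 1)).image (p * ·), F i := by
    refine (sum_subset (fun i hi => ?_) fun i hi hi' => ?_).symm
    · obtain ⟨r, hr, rfl⟩ := mem_image.mp hi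
      exact mem_range.mpr
        (Nat.lt_succ_of_le (Nat.mul_le_mul_left p (Nat.lt_succ_iff.mp (mem_range.mp hr))))
    · refine mul_eq_zero_of_right _ (coeff_expand_of_not_dvd p hp _ fun ⟨q, hq⟩ => hi' ?_)
      refine mem_image.mpr ⟨n - q, mem_range.mpr (by omega), ?_⟩
      rw [Nat.mul_sub, ← hq, Nat.sub_sub_self (Nat.lt_succ_iff.mp (mem_range.mp hi))]
  rw [coeff_mul,
    Nat.sum_antidiagonal_eq_sum_range_succ (fun i j => coeff i ψ * coeff j (expand p hp φ)), hsupp,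
    sum_image fun _ _ _ _ h => Nat.eq_of_mul_eq_mul_left (Nat.pos_of_ne_zero hp) h]
  refine sum_congr rfl fun r _ => ?_
  simp only [F, ← Nat.mul_sub, coeff_expand_mul]

end CommRing

theorem eq_of_mul_derivative_eq {K : Type*} [Field K] [CharZero K] {p q f g : K⟦X⟧}
    (hp : p ≠ 0) (hf : p * d⁄dX K f = q * f) (hg : p * d⁄dX K g = q * g)
    (hg0 : constantCoeff g ≠ 0) (h0 : constantCoeff f = constantCoeff g) : f = g := by
  have hinv : g⁻¹ * g = 1 := PowerSeries.inv_mul_cancel g hg0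
  have hW : p * d⁄dX K (f * g⁻¹) = 0 := by
    rw [Derivation.leibniz, derivative_inv', smul_eq_mul, smul_eq_mul]
    linear_combination (-f * g⁻¹ ^ 2) * hg + g⁻¹ * hf - q * f * g⁻¹ * hinv
  have hfg : f * g⁻¹ = 1 := by
    refine derivative.ext ?_ ?_
    · rw [(mul_eq_zero.mp hW).resolve_left hp, derivative_one]
    · simp [h0, hg0]
  simpa using ((eq_mul_inv_iff_mul_eq hg0).mp hfg.symm).symm

end PowerSeries

/-- The binomial series of `(1 - X) ^ (-a)`. -/
noncomputable def pochSeries (a : ℂ) : ℂ⟦X⟧ := mk fun k => poch a k / k.factorial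

@[simp]
lemma coeff_pochSeries (a : ℂ) (k : ℕ) : coeff k (pochSeries a) = poch a k / k.factorial :=
  coeff_mk _ _

@[simp]
lemma constantCoeff_pochSeries (a : ℂ) : constantCoeff (pochSeries a) = 1 := by
  simp [← coeff_zero_eq_constantCoeff_apply, poch_zero]

lemma derivative_pochSeries (a : ℂ) : d⁄dX ℂ (pochSeries a) = C a * pochSeries (a + 1) := by
  ext n
  rw [coeff_derivative, coeff_C_mul, coeff_pochSeries, coeff_pochSeries, poch_succ',
    Nat.factorial_succ]
  have := n.factorial_ne_zero
  field_simp
  push_cast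
  ring

lemma one_sub_X_mul_pochSeries_add_one (a : ℂ) :
    (1 - X) * pochSeries (a + 1) = pochSeries a := by
  ext n
  rcases n with _ | n
  · simp [poch_zero]
  · rw [sub_mul, one_mul, map_sub, coeff_succ_X_mul]
    simp only [coeff_pochSeries]
    rw [poch_succ, poch_succ', Nat.factorial_succ]
    have := n.factorial_ne_zero
    field_simp
    push_cast
    ring

lemma one_sub_X_mul_derivative_pochSeries (a : ℂ) :
    (1 - X) * d⁄dX ℂ (pochSeries a) = C a * pochSeries a := by
  rw [derivative_pochSeries, mul_left_comm, one_sub_X_mul_pochSeries_add_one]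

lemma pochSeries_add (a b : ℂ) : pochSeries (a + b) = pochSeries a * pochSeries b := by
  refine eq_of_mul_derivative_eq (p := 1 - X) (q := C (a + b)) ?_
    (one_sub_X_mul_derivative_pochSeries _) ?_ (by simp) (by simp)
  · exact fun h => by simpa using congrArg constantCoeff h
  · rw [Derivation.leibniz, smul_eq_mul, smul_eq_mul, map_add]
    linear_combination pochSeries a * one_sub_X_mul_derivative_pochSeries b
      + pochSeries b * one_sub_X_mul_derivative_pochSeries a

lemma rescale_neg_one_pochSeries_mul_self (a : ℂ) :
    rescale (-1) (pochSeries a) * pochSeries a = expand 2 two_ne_zero (pochSeries a) := by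
  have hR : (1 + X) * d⁄dX ℂ (rescale (-1) (pochSeries a))
      = -C a * rescale (-1) (pochSeries a) := by
    have := congrArg (rescale (-1 : ℂ)) (one_sub_X_mul_derivative_pochSeries a)
    rw [map_mul, map_mul, map_sub, map_one, rescale_neg_one_X, rescale_C] at this
    rw [derivative_rescale, map_neg, map_one]
    linear_combination (-1) * this
  have hQ : (1 - X ^ 2) * d⁄dX ℂ (expand 2 two_ne_zero (pochSeries a))
      = 2 * C a * X * expand 2 two_ne_zero (pochSeries a) := by
    have := congrArg (expand 2 two_ne_zero) (one_sub_X_mul_derivative_pochSeries a)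
    rw [map_mul, map_mul, map_sub, map_one, expand_X, expand_C] at this
    rw [derivative_expand, Nat.cast_ofNat, Nat.add_one_sub_one, pow_one]
    linear_combination (2 * X) * this
  refine eq_of_mul_derivative_eq (p := 1 - X ^ 2) (q := 2 * C a * X) ?_ ?_ hQ (by simp) (by
    rw [map_mul, constantCoeff_expand, ← coeff_zero_eq_constantCoeff_apply, coeff_rescale]
    simp [poch_zero])
  · exact fun h => by simpa using congrArg constantCoeff h
  · rw [Derivation.leibniz, smul_eq_mul, smul_eq_mul]
    linear_combination (1 - X) * pochSeries a * hR
      + (1 + X) * rescale (-1) (pochSeries a) * one_sub_X_mul_derivative_pochSeries a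

lemma sum_poch_neg_natCast_mul_two_pow (a c : ℂ) (N : ℕ) :
    ∑ k ∈ range (N + 1), poch (-N) k * poch a k * 2 ^ k * poch (c + k) (N - k) / k.factorial
      = ∑ i ∈ range (N + 1), (-1) ^ i * N.choose i * poch a i * poch (c - a) (N - i) := by
  have hterm : ∀ k ∈ range (N + 1),
      poch (-N) k * poch a k * 2 ^ k * poch (c + k) (N - k) / k.factorial
        = ∑ i ∈ range (k + 1),
            (-1) ^ k * N.choose k * k.choose i * poch a k * poch (c + k) (N - k) := by
    intro k _
    have htwo : (2 : ℂ) ^ k = ∑ i ∈ range (k + 1), (k.choose i : ℂ) := by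
      exact_mod_cast (Nat.sum_range_choose k).symm
    rw [poch_neg_natCast, htwo, mul_sum, sum_mul, sum_div]
    refine sum_congr rfl fun i _ => ?_
    have := k.factorial_ne_zero
    field_simp
  rw [sum_congr rfl hterm]
  simp only [range_eq_Ico]
  rw [← sum_Ico_Ico_comm]
  refine sum_congr rfl fun i hi => ?_
  have hiN : i ≤ N := Nat.lt_succ_iff.mp (mem_Ico.mp hi).2
  rw [sum_Ico_eq_sum_range, show N + 1 - i = N - i + 1 by omega,
    show c - a = (c + i) - (a + i) by ring, poch_sub_eq_sum, mul_sum]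
  refine sum_congr rfl fun m hm => ?_
  have hmN : m ≤ N - i := Nat.lt_succ_iff.mp (mem_range.mp hm)
  have hchoose : (N.choose (i + m) * (i + m).choose i : ℂ) = N.choose i * (N - i).choose m := by
    have := Nat.choose_mul (n := N) (k := i + m) (s := i) (by omega)
    rw [Nat.add_sub_cancel_left] at this
    exact_mod_cast this
  rw [poch_add, pow_add, show N - (i + m) = N - i - m by omega,
    show c + ((i + m : ℕ) : ℂ) = c + i + m by push_cast; ring]
  linear_combination ((-1) ^ i * (-1) ^ m * poch a i * poch (a + i) m
    * poch (c + i + m) (N - i - m)) * hchoose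

lemma factorial_mul_coeff_rescale_neg_one_mul (a d : ℂ) (N : ℕ) :
    N.factorial * coeff N (rescale (-1) (pochSeries a) * pochSeries d)
      = ∑ i ∈ range (N + 1), (-1) ^ i * N.choose i * poch a i * poch d (N - i) := by
  rw [coeff_mul, Nat.sum_antidiagonal_eq_sum_range_succ
    (fun i j => coeff i (rescale (-1) (pochSeries a)) * coeff j (pochSeries d)), mul_sum]
  refine sum_congr rfl fun i hi => ?_
  have hfac := Nat.choose_mul_factorial_mul_factorial (Nat.lt_succ_iff.mp (mem_range.mp hi))
  have := i.factorial_ne_zero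
  have := (N - i).factorial_ne_zero
  rw [coeff_rescale, coeff_pochSeries, coeff_pochSeries, ← hfac]
  field_simp
  push_cast
  ring

lemma factorial_mul_coeff_two_mul_rescale_neg_one_mul_sub (a : ℂ) (j n : ℕ) :
    n.factorial * coeff (2 * n) (rescale (-1) (pochSeries a) * pochSeries (a - j))
      = ∑ r ∈ range (min (j / 2) n + 1),
          (-1) ^ r * j.choose (2 * r) * poch (-n) r * poch a (n - r) := by
  have hprod : rescale (-1) (pochSeries a) * pochSeries (a - j)
      = pochSeries (-j) * expand 2 two_ne_zero (pochSeries a) := by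
    rw [sub_eq_add_neg, pochSeries_add, ← mul_assoc, rescale_neg_one_pochSeries_mul_self, mul_comm]
  rw [hprod, coeff_mul_expand, mul_sum]
  symm
  refine sum_subset_zero_on_sdiff (range_subset_range.mpr (by omega)) (fun r hr => ?_)
    fun r hr => ?_
  · obtain ⟨hrn, hrj⟩ := mem_sdiff.mp hr
    rw [coeff_pochSeries, poch_neg_natCast, Nat.choose_eq_zero_of_lt (by simp at hrn hrj; omega)]
    simp
  · have hrn : r ≤ n := by simp at hr; omega
    have hfac := Nat.choose_mul_factorial_mul_factorial hrn
    have := (2 * r).factorial_ne_zero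
    have := (n - r).factorial_ne_zero
    rw [coeff_pochSeries, coeff_pochSeries, poch_neg_natCast, poch_neg_natCast, ← hfac]
    field_simp
    push_cast
    ring

theorem twoF1_neg2n_a_twoAmj (n j : ℕ) (a : ℂ)
    (h : ∀ k ≤ 2 * n, poch (2 * a - j) k ≠ 0) :
    ∑ k ∈ range (2 * n + 1),
        poch (-(2 * n : ℂ)) k * poch a k * 2 ^ k / (poch (2 * a - j) k * (k.factorial : ℂ))
      = (2 : ℂ) ^ (2 * n) * poch (1 / 2) n / poch (2 * a - j) (2 * n) *
          ∑ r ∈ range (min (j / 2) n + 1),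
            (-1 : ℂ) ^ r * (j.choose (2 * r) : ℂ) * poch (-(n : ℂ)) r * poch a (n - r) := by
  set c := 2 * a - j
  have hc : poch c (2 * n) ≠ 0 := h _ le_rfl
  have hlhs : ∑ k ∈ range (2 * n + 1),
        poch (-(2 * n : ℂ)) k * poch a k * 2 ^ k / (poch c k * (k.factorial : ℂ))
      = (∑ k ∈ range (2 * n + 1), poch (-(2 * n : ℕ)) k * poch a k * 2 ^ k
          * poch (c + k) (2 * n - k) / k.factorial) / poch c (2 * n) := by
    rw [sum_div]
    refine sum_congr rfl fun k hk => ?_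
    rw [div_mul_eq_div_div, div_eq_mul_inv _ (poch c k),
      inv_poch_eq_div (Nat.lt_succ_iff.mp (mem_range.mp hk)) hc]
    push_cast
    ring
  rw [hlhs, sum_poch_neg_natCast_mul_two_pow, ← factorial_mul_coeff_rescale_neg_one_mul,
    show c - a = a - j by ring, ← two_pow_mul_poch_half_mul_factorial, mul_assoc, mul_assoc,
    factorial_mul_coeff_two_mul_rescale_neg_one_mul_sub]
  ring
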